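/- arXiv:quant-ph/0506107 — 7 statements merged into one kernel-verified Lean document; each statement's English description precedes it below -/
import Mathlib

section
/- Let E(M) = ∑ᵢ pᵢ Uᵢ M Uᵢ† be a mixture-of-unitaries channel on 2×2 complex matrices, let ρ₁, …, ρₙ be 2×2 matrices with E(ρⱼ) = ρ⁰ for every j, and let ρ = ∑ⱼ λⱼρⱼ be any affine combination (λⱼ real, ∑ λⱼ = 1). Then ‖ρ⁰ − (1/2)·I‖_F ≤ ‖ρ − (1/2)·I‖_F, where ‖·‖_F is the Frobenius norm. (Every achievable output state ρ⁰ is at least as close to the maximally mixed state (1/2)I as every element of the affine span of the plaintext set.) -/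
/-!
A mixture of unitary conjugations `E` is linear and unital, so from `E ρⱼ = ρ⁰` and `∑ λⱼ = 1`
we get `E ρ = ρ⁰` and hence `ρ⁰ - I/2 = E (ρ - I/2)`. Each unitary conjugation is an isometry for
the Frobenius norm, so by the triangle inequality the convex combination `E` is a contraction.
-/

open Matrix

noncomputable def frobNorm (M : Matrix (Fin 2) (Fin 2) ℂ) : ℝ :=
  Real.sqrt (∑ j, ∑ k, ‖M j k‖ ^ 2)

open scoped Matrix.Norms.Frobenius

namespace Matrix

variable {𝕜 ι κ : Type*} [RCLike 𝕜] [Fintype ι] [Fintype κ]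

theorem frobenius_norm_sq_eq_re_trace (A : Matrix ι κ 𝕜) :
    ‖A‖ ^ 2 = RCLike.re (Aᴴ * A).trace := by
  rw [frobenius_norm_def, ← Real.sqrt_eq_rpow, Real.sq_sqrt (by positivity), Finset.sum_comm]
  simp only [trace, diag_apply, mul_apply, conjTranspose_apply, RCLike.star_def,
    RCLike.conj_mul, map_sum]
  norm_cast

theorem frobenius_norm_unitary_mul [DecidableEq ι] {U : Matrix ι ι 𝕜}
    (hU : U ∈ unitaryGroup ι 𝕜) (A : Matrix ι κ 𝕜) : ‖U * A‖ = ‖A‖ := by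
  have hUU : Uᴴ * U = 1 := mem_unitaryGroup_iff'.mp hU
  rw [← sq_eq_sq₀ (norm_nonneg _) (norm_nonneg _), frobenius_norm_sq_eq_re_trace,
    frobenius_norm_sq_eq_re_trace, conjTranspose_mul, Matrix.mul_assoc, ← Matrix.mul_assoc Uᴴ,
    hUU, Matrix.one_mul]

theorem frobenius_norm_mul_unitary [DecidableEq κ] {U : Matrix κ κ 𝕜}
    (hU : U ∈ unitaryGroup κ 𝕜) (A : Matrix ι κ 𝕜) : ‖A * U‖ = ‖A‖ := by
  rw [← frobenius_norm_conjTranspose, conjTranspose_mul]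
  exact (frobenius_norm_unitary_mul (Unitary.star_mem hU) Aᴴ).trans
    (frobenius_norm_conjTranspose A)

theorem frobenius_norm_unitary_conj [DecidableEq ι] {U : Matrix ι ι 𝕜}
    (hU : U ∈ unitaryGroup ι 𝕜) (M : Matrix ι ι 𝕜) : ‖U * M * Uᴴ‖ = ‖M‖ :=
  (frobenius_norm_mul_unitary (Unitary.star_mem hU) _).trans (frobenius_norm_unitary_mul hU M)

noncomputable def mixedUnitaryChannel (p : κ → ℝ) (U : κ → Matrix ι ι 𝕜) :
    Matrix ι ι 𝕜 →ₗ[𝕜] Matrix ι ι 𝕜 :=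
  ∑ i, p i • (LinearMap.mulLeft 𝕜 (U i) ∘ₗ LinearMap.mulRight 𝕜 (U i)ᴴ)

theorem mixedUnitaryChannel_apply (p : κ → ℝ) (U : κ → Matrix ι ι 𝕜) (M : Matrix ι ι 𝕜) :
    mixedUnitaryChannel p U M = ∑ i, p i • (U i * M * (U i)ᴴ) := by
  simp [mixedUnitaryChannel, LinearMap.sum_apply, Matrix.mul_assoc]

variable [DecidableEq ι] {p : κ → ℝ} {U : κ → Matrix ι ι 𝕜}

theorem mixedUnitaryChannel_one (hU : ∀ i, U i ∈ unitaryGroup ι 𝕜) (hp : ∑ i, p i = 1) :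
    mixedUnitaryChannel p U 1 = 1 := by
  have hUU (i : κ) : U i * (U i)ᴴ = 1 := mem_unitaryGroup_iff.mp (hU i)
  simp only [mixedUnitaryChannel_apply, Matrix.mul_one, hUU, ← Finset.sum_smul, hp, one_smul]

theorem norm_mixedUnitaryChannel_le (hU : ∀ i, U i ∈ unitaryGroup ι 𝕜) (hp₀ : ∀ i, 0 ≤ p i)
    (hp : ∑ i, p i = 1) (M : Matrix ι ι 𝕜) : ‖mixedUnitaryChannel p U M‖ ≤ ‖M‖ :=
  calc ‖mixedUnitaryChannel p U M‖
      ≤ ∑ i, ‖p i • (U i * M * (U i)ᴴ)‖ := by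
        rw [mixedUnitaryChannel_apply]; exact norm_sum_le _ _
    _ = ∑ i, p i * ‖M‖ := by
        simp only [norm_smul, frobenius_norm_unitary_conj (hU _), Real.norm_of_nonneg (hp₀ _)]
    _ = ‖M‖ := by rw [← Finset.sum_mul, hp, one_mul]

end Matrix

theorem LinearMap.map_sum_smul_of_forall_eq {R M N ι : Type*} [Semiring R] [AddCommMonoid M]
    [AddCommMonoid N] [Module R M] [Module R N] (f : M →ₗ[R] N) {s : Finset ι} {w : ι → R}
    (hw : ∑ j ∈ s, w j = 1) {x : ι → M} {y : N} (hx : ∀ j ∈ s, f (x j) = y) :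
    f (∑ j ∈ s, w j • x j) = y := by
  simp only [map_sum, map_smul]
  rw [Finset.sum_congr rfl fun j hj => by rw [hx j hj], ← Finset.sum_smul, hw, one_smul]

theorem frobNorm_eq_norm (M : Matrix (Fin 2) (Fin 2) ℂ) : frobNorm M = ‖M‖ := by
  rw [frobenius_norm_def, frobNorm, Real.sqrt_eq_rpow]
  norm_cast

theorem stmt_3 (n m : ℕ)
    (U : Fin n → Matrix (Fin 2) (Fin 2) ℂ)
    (hU : ∀ i, U i ∈ Matrix.unitaryGroup (Fin 2) ℂ)
    (p : Fin n → ℝ) (hp : ∀ i, 0 ≤ p i) (hpsum : ∑ i, p i = 1)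
    (ρs : Fin m → Matrix (Fin 2) (Fin 2) ℂ) (ρ0 : Matrix (Fin 2) (Fin 2) ℂ)
    (hE : ∀ j, ∑ i, (p i : ℂ) • (U i * ρs j * (U i)ᴴ) = ρ0)
    (lam : Fin m → ℝ) (hlam : ∑ j, lam j = 1)
    (ρ : Matrix (Fin 2) (Fin 2) ℂ) (hρ : ρ = ∑ j, (lam j : ℂ) • ρs j) :
    frobNorm (ρ0 - (1/2 : ℂ) • 1) ≤ frobNorm (ρ - (1/2 : ℂ) • 1) := by
  set Φ := mixedUnitaryChannel p U
  have hΦρs : ∀ j ∈ Finset.univ, Φ (ρs j) = ρ0 := fun j _ => by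
    simpa only [Φ, mixedUnitaryChannel_apply, Complex.coe_smul] using hE j
  have hΦρ : Φ ρ = ρ0 := by
    rw [hρ]
    exact Φ.map_sum_smul_of_forall_eq (by exact_mod_cast hlam) hΦρs
  have hΦ : ρ0 - (1/2 : ℂ) • 1 = Φ (ρ - (1/2 : ℂ) • 1) := by
    rw [map_sub, map_smul, hΦρ, mixedUnitaryChannel_one hU hpsum]
  rw [hΦ, frobNorm_eq_norm, frobNorm_eq_norm]
  exact norm_mixedUnitaryChannel_le hU hp hpsum _
end

section
/- For any two qubit density matrices ρ₁, ρ₂ there exists a 2×2 unitary matrix U such that (1/2)·ρ₁ + (1/2)·U ρ₁ U† = (1/2)·ρ₂ + (1/2)·U ρ₂ U†. (One bit of key suffices to encrypt any set of two qubit states: the channel ρ ↦ (1/2)ρ + (1/2)UρU† with U the rotation by 180 degrees about the axis through the output state sends both plaintexts to the same ciphertext state.) -/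
/-!
The channel `ρ ↦ ρ/2 + UρU†/2` is linear, so it suffices to find a unitary `U` with
`U D U† = -D` for `D = ρ₁ - ρ₂`. This `D` is Hermitian and traceless, i.e. `D = r · σ`
for a real vector `r`, and the rotation by `π` about any axis orthogonal to `r` negates it.
The rotation `!![0, w; -w̄, 0]`, with `w` the phase of the off-diagonal entry of `D`, is one such.
-/

open Matrix ComplexOrder

theorem Complex.exists_star_mul_self_eq_one_and_mul_self_mul_star_eq (b : ℂ) :
    ∃ w : ℂ, star w * w = 1 ∧ w * w * star b = b := by
  set w := exp (arg b * I)
  have hw : star w * w = 1 := by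
    rw [star_def, conj_mul', norm_exp_ofReal_mul_I, ofReal_one, one_pow]
  have hb : (‖b‖ : ℂ) * w = b := norm_mul_exp_arg_mul_I b
  have hb' : (‖b‖ : ℂ) * star w = star b := by simpa using congrArg star hb
  exact ⟨w, hw, by linear_combination (-(w * w)) * hb' + (‖b‖ : ℂ) * w * hw + hb⟩

namespace Matrix

variable {R : Type*} [CommRing R] [StarRing R]

theorem antidiag_mem_unitaryGroup {w : R} (hw : star w * w = 1) :
    !![0, w; -star w, 0] ∈ unitaryGroup (Fin 2) R := by
  rw [mem_unitaryGroup_iff]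
  ext i j
  fin_cases i <;> fin_cases j <;>
    simp [star_eq_conjTranspose, mul_apply, Fin.sum_univ_two, mul_comm w, hw]

theorem antidiag_mul_mul_conjTranspose_eq_neg {A : Matrix (Fin 2) (Fin 2) R}
    (hA : A.IsHermitian) (htr : A.trace = 0) {w : R} (hw : star w * w = 1)
    (hwA : w * w * star (A 0 1) = A 0 1) :
    !![0, w; -star w, 0] * A * !![0, w; -star w, 0]ᴴ = -A := by
  have h10 : A 1 0 = star (A 0 1) := (hA.apply 1 0).symm
  have h11 : A 1 1 = -A 0 0 := by rw [trace_fin_two] at htr; linear_combination htr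
  have hwA' : star w * star w * A 0 1 = star (A 0 1) := by simpa using congrArg star hwA
  ext i j
  fin_cases i <;> fin_cases j <;>
    simp only [mul_apply, Fin.sum_univ_two, conjTranspose_apply, Matrix.neg_apply, of_apply,
      Fin.zero_eta, Fin.mk_one, cons_val', cons_val_zero, cons_val_one, cons_val_fin_one, star_zero,
      star_neg, star_star, h10, h11]
  · linear_combination -A 0 0 * hw
  · linear_combination -hwA
  · linear_combination -hwA'
  · linear_combination A 0 0 * hw

theorem IsHermitian.exists_unitary_mul_mul_conjTranspose_eq_neg
    {A : Matrix (Fin 2) (Fin 2) ℂ} (hA : A.IsHermitian) (htr : A.trace = 0) :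
    ∃ U ∈ unitaryGroup (Fin 2) ℂ, U * A * Uᴴ = -A := by
  obtain ⟨w, hw, hwA⟩ := Complex.exists_star_mul_self_eq_one_and_mul_self_mul_star_eq (A 0 1)
  exact ⟨_, antidiag_mem_unitaryGroup hw, antidiag_mul_mul_conjTranspose_eq_neg hA htr hw hwA⟩

end Matrix

theorem stmt_7 (ρ1 ρ2 : Matrix (Fin 2) (Fin 2) ℂ)
    (h1 : ρ1.PosSemidef) (t1 : ρ1.trace = 1)
    (h2 : ρ2.PosSemidef) (t2 : ρ2.trace = 1) :
    ∃ U : Matrix (Fin 2) (Fin 2) ℂ, U ∈ Matrix.unitaryGroup (Fin 2) ℂ ∧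
      (1/2 : ℂ) • ρ1 + (1/2 : ℂ) • (U * ρ1 * Uᴴ) =
      (1/2 : ℂ) • ρ2 + (1/2 : ℂ) • (U * ρ2 * Uᴴ) := by
  obtain ⟨U, hU, hconj⟩ := (h1.1.sub h2.1).exists_unitary_mul_mul_conjTranspose_eq_neg
    (by rw [trace_sub, t1, t2, sub_self])
  refine ⟨U, hU, ?_⟩
  rw [mul_sub, sub_mul] at hconj
  linear_combination (norm := module) (1 / 2 : ℂ) • hconj
end

section
/- For any three qubit density matrices ρ₁, ρ₂, ρ₃ there exists a 2×2 unitary matrix U such that the three matrices (1/2)·ρᵢ + (1/2)·U ρᵢ U† for i = 1, 2, 3 are all equal. (One bit of key suffices to encrypt three qubit states into the most mixed state of their affine span: the channel ρ ↦ (1/2)ρ + (1/2)UρU† with U the rotation by 180 degrees about the axis of the circle spanned by the three states sends all three plaintexts to the same ciphertext state.) -/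
open Matrix ComplexOrder Complex

/-!
The differences `ρ₁ - ρ₂` and `ρ₂ - ρ₃` are traceless Hermitian, i.e. of the form `x ⬝ σ` and
`y ⬝ σ` for Bloch vectors `x, y ∈ ℝ³`. Pick a unit vector `n ⊥ x, y` and `U = n ⬝ σ`: it is
Hermitian with `U² = 1`, and `n ⬝ σ` anticommutes with every `z ⬝ σ` for `z ⊥ n`, since
`AB + BA = tr(AB) • 1` for traceless `2 × 2` matrices. So `U` negates both differences, and the
channel `ρ ↦ ρ/2 + UρU†/2` identifies the three states.
-/

theorem Submodule.exists_norm_eq_one_mem_orthogonal {𝕜 E : Type*} [RCLike 𝕜]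
    [NormedAddCommGroup E] [InnerProductSpace 𝕜 E] [FiniteDimensional 𝕜 E]
    (K : Submodule 𝕜 E) (hK : Module.finrank 𝕜 K < Module.finrank 𝕜 E) :
    ∃ x ∈ Kᗮ, ‖x‖ = 1 := by
  have hne : Kᗮ ≠ ⊥ := by
    rw [Ne, Submodule.orthogonal_eq_bot_iff]
    rintro rfl
    exact hK.ne (finrank_top 𝕜 E)
  obtain ⟨x, hxK, hx0⟩ := (Submodule.ne_bot_iff _).mp hne
  exact ⟨(‖x‖⁻¹ : 𝕜) • x, Kᗮ.smul_mem _ hxK, norm_smul_inv_norm hx0⟩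

-- Cayley–Hamilton for traceless `2 × 2` matrices, polarized.
theorem Matrix.mul_add_mul_eq_trace_smul_one {R : Type*} [CommRing R]
    {A B : Matrix (Fin 2) (Fin 2) R} (hA : A.trace = 0) (hB : B.trace = 0) :
    A * B + B * A = (A * B).trace • (1 : Matrix (Fin 2) (Fin 2) R) := by
  rw [trace_fin_two, add_eq_zero_iff_eq_neg'] at hA hB
  ext i j
  fin_cases i <;> fin_cases j <;> simp [Matrix.mul_apply, trace_fin_two, hA, hB] <;> ring

theorem Matrix.mul_mul_eq_neg_of_trace_mul_eq_zero {R : Type*} [CommRing R]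
    {N D : Matrix (Fin 2) (Fin 2) R} (hN : N.trace = 0) (hD : D.trace = 0)
    (hND : (N * D).trace = 0) (hNN : N * N = 1) : N * D * N = -D := by
  have hanti : N * D = -(D * N) := by
    simpa [hND, eq_neg_iff_add_eq_zero] using mul_add_mul_eq_trace_smul_one hN hD
  rw [hanti, neg_mul, Matrix.mul_assoc, hNN, Matrix.mul_one]

theorem smul_add_smul_mul_mul_eq {K A : Type*} [Semiring K] [Ring A] [Module K A]
    (c : K) {U V a b : A} (h : U * (a - b) * V = -(a - b)) :
    c • a + c • (U * a * V) = c • b + c • (U * b * V) := by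
  rw [← smul_add, ← smul_add]
  congr 1
  rw [mul_sub, sub_mul] at h
  linear_combination (norm := noncomm_ring) h

-- `x ⬝ σ = x₀ σₓ + x₁ σ_y + x₂ σ_z`
def pauliDot (x : EuclideanSpace ℝ (Fin 3)) : Matrix (Fin 2) (Fin 2) ℂ :=
  !![(x 2 : ℂ), x 0 - x 1 * I; x 0 + x 1 * I, -x 2]

theorem trace_pauliDot (x : EuclideanSpace ℝ (Fin 3)) : (pauliDot x).trace = 0 := by
  simp [pauliDot, trace_fin_two]

theorem isHermitian_pauliDot (x : EuclideanSpace ℝ (Fin 3)) : (pauliDot x).IsHermitian := by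
  ext i j
  fin_cases i <;> fin_cases j <;> simp [pauliDot, Complex.ext_iff]

theorem trace_pauliDot_mul_pauliDot (x y : EuclideanSpace ℝ (Fin 3)) :
    (pauliDot x * pauliDot y).trace = 2 * (inner ℝ x y : ℂ) := by
  simp only [pauliDot, trace_fin_two, PiLp.inner_apply, RCLike.inner_apply, conj_trivial,
    Fin.sum_univ_three, mul_apply, Fin.sum_univ_two, of_apply, cons_val', cons_val_zero,
    cons_val_one, empty_val', cons_val_fin_one]
  push_cast
  linear_combination (-2 * (x 1 : ℂ) * y 1) * I_sq

theorem exists_pauliDot_eq {D : Matrix (Fin 2) (Fin 2) ℂ} (hD : D.IsHermitian)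
    (htr : D.trace = 0) : ∃ x, pauliDot x = D := by
  refine ⟨!₂[(D 0 1).re, -(D 0 1).im, (D 0 0).re], ?_⟩
  have h00 : (D 0 0).im = 0 := by
    have := congrArg im (hD.apply 0 0)
    simp only [star_def, conj_im] at this
    linarith
  have h10 : D 1 0 = star (D 0 1) := (hD.apply 1 0).symm
  have h11 : D 1 1 = -D 0 0 := by rw [trace_fin_two] at htr; linear_combination htr
  ext i j
  fin_cases i <;> fin_cases j <;> simp [pauliDot, Complex.ext_iff, h00, h10, h11]

theorem pauliDot_mul_self (x : EuclideanSpace ℝ (Fin 3)) :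
    pauliDot x * pauliDot x = ((‖x‖ ^ 2 : ℝ) : ℂ) • 1 := by
  have h := mul_add_mul_eq_trace_smul_one (trace_pauliDot x) (trace_pauliDot x)
  rw [trace_pauliDot_mul_pauliDot, real_inner_self_eq_norm_sq, ← two_smul ℂ, mul_smul] at h
  exact smul_right_injective _ two_ne_zero h

theorem exists_unitary_conj_eq_neg {D E : Matrix (Fin 2) (Fin 2) ℂ}
    (hD : D.IsHermitian) (htrD : D.trace = 0) (hE : E.IsHermitian) (htrE : E.trace = 0) :
    ∃ U ∈ unitaryGroup (Fin 2) ℂ, U * D * Uᴴ = -D ∧ U * E * Uᴴ = -E := by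
  obtain ⟨x, rfl⟩ := exists_pauliDot_eq hD htrD
  obtain ⟨y, rfl⟩ := exists_pauliDot_eq hE htrE
  obtain ⟨n, hn, hn1⟩ := (Submodule.span ℝ (Set.range ![x, y])).exists_norm_eq_one_mem_orthogonal
    ((finrank_range_le_card _).trans_lt (by simp))
  have horth : ∀ z ∈ Set.range ![x, y], inner ℝ n z = 0 := fun z hz ↦
    Submodule.inner_left_of_mem_orthogonal (Submodule.subset_span hz) hn
  set N := pauliDot n
  have hNH : Nᴴ = N := isHermitian_pauliDot n
  have hNN : N * N = 1 := by simp [N, pauliDot_mul_self, hn1]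
  have hflip : ∀ z ∈ Set.range ![x, y], N * pauliDot z * Nᴴ = -pauliDot z := fun z hz ↦ by
    rw [hNH]
    refine mul_mul_eq_neg_of_trace_mul_eq_zero (trace_pauliDot n) (trace_pauliDot z) ?_ hNN
    simp [N, trace_pauliDot_mul_pauliDot, horth z hz]
  refine ⟨N, ?_, hflip x ⟨0, rfl⟩, hflip y ⟨1, rfl⟩⟩
  rw [mem_unitaryGroup_iff, star_eq_conjTranspose, hNH, hNN]

theorem stmt_8 (ρ1 ρ2 ρ3 : Matrix (Fin 2) (Fin 2) ℂ)
    (h1 : ρ1.PosSemidef) (t1 : ρ1.trace = 1)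
    (h2 : ρ2.PosSemidef) (t2 : ρ2.trace = 1)
    (h3 : ρ3.PosSemidef) (t3 : ρ3.trace = 1) :
    ∃ U : Matrix (Fin 2) (Fin 2) ℂ, U ∈ Matrix.unitaryGroup (Fin 2) ℂ ∧
      (1/2 : ℂ) • ρ1 + (1/2 : ℂ) • (U * ρ1 * Uᴴ) =
      (1/2 : ℂ) • ρ2 + (1/2 : ℂ) • (U * ρ2 * Uᴴ) ∧
      (1/2 : ℂ) • ρ2 + (1/2 : ℂ) • (U * ρ2 * Uᴴ) =
      (1/2 : ℂ) • ρ3 + (1/2 : ℂ) • (U * ρ3 * Uᴴ) := by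
  obtain ⟨U, hU, h12, h23⟩ := exists_unitary_conj_eq_neg (h1.1.sub h2.1)
    (by rw [trace_sub, t1, t2, sub_self]) (h2.1.sub h3.1) (by rw [trace_sub, t2, t3, sub_self])
  exact ⟨U, hU, smul_add_smul_mul_mul_eq _ h12, smul_add_smul_mul_mul_eq _ h23⟩
end

section
/- Let U₁, …, Uₙ be 2×2 unitary matrices and p₁, …, pₙ ≥ 0 with ∑ pᵢ = 1, and let ρ₁ ≠ ρ₂ be two distinct qubit density matrices such that ∑ᵢ pᵢ Uᵢ ρ₁ Uᵢ† = ∑ᵢ pᵢ Uᵢ ρ₂ Uᵢ†. Then the Shannon entropy of the key satisfies −∑ᵢ pᵢ log₂ pᵢ ≥ 1. (One bit of key is necessary to encrypt any two distinct qubit states.) -/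
/-!
Write `Δ = ρ1 - ρ2 ≠ 0`. The mixing condition says `∑ pᵢ • Uᵢ Δ Uᵢᴴ = 0`, and conjugation by a
unitary preserves the operator norm, so all the vectors `Uᵢ Δ Uᵢᴴ` have the same positive norm.
Isolating the `j`-th term and using the triangle inequality gives `pⱼ ≤ 1 - pⱼ`, i.e. every
probability is at most `1/2`, hence every `-log₂ pᵢ ≥ 1` and the entropy is at least one bit.
-/

open Matrix ComplexOrder

theorem le_half_of_sum_smul_eq_zero {𝕜 E ι : Type*} [RCLike 𝕜] [SeminormedAddCommGroup E]
    [NormedSpace 𝕜 E] [Fintype ι] {p : ι → ℝ} (hp : ∀ i, 0 ≤ p i) (hsum : ∑ i, p i = 1)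
    {v : ι → E} {c : ℝ} (hc : 0 < c) (hv : ∀ i, ‖v i‖ = c)
    (h : ∑ i, (p i : 𝕜) • v i = 0) (j : ι) : p j ≤ 1 / 2 := by
  classical
  have hnorm : ∀ i, ‖(p i : 𝕜) • v i‖ = p i * c := fun i => by
    rw [norm_smul, RCLike.norm_ofReal, abs_of_nonneg (hp i), hv i]
  have hrest : ∑ i ∈ Finset.univ.erase j, p i = 1 - p j := by
    rw [← hsum, ← Finset.add_sum_erase _ _ (Finset.mem_univ j), add_sub_cancel_left]
  have hsplit : (p j : 𝕜) • v j = -∑ i ∈ Finset.univ.erase j, (p i : 𝕜) • v i := by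
    rw [eq_neg_iff_add_eq_zero,
      Finset.add_sum_erase _ (fun i => (p i : 𝕜) • v i) (Finset.mem_univ j), h]
  have hle : p j * c ≤ (1 - p j) * c :=
    calc p j * c = ‖(p j : 𝕜) • v j‖ := (hnorm j).symm
      _ ≤ ∑ i ∈ Finset.univ.erase j, ‖(p i : 𝕜) • v i‖ := by
        rw [hsplit, norm_neg]; exact norm_sum_le _ _
      _ = (1 - p j) * c := by simp only [hnorm, ← Finset.sum_mul, hrest]
  linarith [le_of_mul_le_mul_right hle hc]

section L2Operator

open scoped Matrix.Norms.L2Operator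

theorem Matrix.l2_opNorm_unitary_conj {m : Type*} [Fintype m] [DecidableEq m]
    {U : Matrix m m ℂ} (hU : U ∈ unitaryGroup m ℂ) (A : Matrix m m ℂ) : ‖U * A * Uᴴ‖ = ‖A‖ := by
  rw [← star_eq_conjTranspose, CStarRing.norm_mul_mem_unitary _ (Unitary.star_mem hU),
    CStarRing.norm_mem_unitary_mul _ hU]

theorem Matrix.le_half_of_sum_smul_unitary_conj_eq_zero {m ι : Type*} [Fintype m]
    [DecidableEq m] [Fintype ι] {U : ι → Matrix m m ℂ} (hU : ∀ i, U i ∈ unitaryGroup m ℂ)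
    {p : ι → ℝ} (hp : ∀ i, 0 ≤ p i) (hsum : ∑ i, p i = 1) {Δ : Matrix m m ℂ} (hΔ : Δ ≠ 0)
    (h : ∑ i, (p i : ℂ) • (U i * Δ * (U i)ᴴ) = 0) (j : ι) : p j ≤ 1 / 2 :=
  le_half_of_sum_smul_eq_zero hp hsum (norm_pos_iff.mpr hΔ)
    (fun i => l2_opNorm_unitary_conj (hU i) Δ) h j

end L2Operator

theorem le_neg_mul_logb_two {x : ℝ} (hx : 0 ≤ x) (hx2 : x ≤ 1 / 2) :
    x ≤ -(x * Real.logb 2 x) := by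
  rcases hx.eq_or_lt with rfl | hpos
  · simp
  have hlog : Real.logb 2 x ≤ -1 :=
    calc Real.logb 2 x ≤ Real.logb 2 (1 / 2) := Real.logb_le_logb_of_le (by norm_num) hpos hx2
      _ = -1 := by rw [one_div, Real.logb_inv, Real.logb_self_eq_one (by norm_num)]
  nlinarith

theorem one_le_neg_sum_mul_logb_two {ι : Type*} [Fintype ι] {p : ι → ℝ} (hp : ∀ i, 0 ≤ p i)
    (hsum : ∑ i, p i = 1) (hhalf : ∀ i, p i ≤ 1 / 2) : 1 ≤ -(∑ i, p i * Real.logb 2 (p i)) :=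
  calc (1 : ℝ) = ∑ i, p i := hsum.symm
    _ ≤ ∑ i, -(p i * Real.logb 2 (p i)) :=
      Finset.sum_le_sum fun i _ => le_neg_mul_logb_two (hp i) (hhalf i)
    _ = -(∑ i, p i * Real.logb 2 (p i)) := Finset.sum_neg_distrib _

theorem stmt_10_general (n : ℕ) (U : Fin n → Matrix (Fin 2) (Fin 2) ℂ)
    (hU : ∀ i, U i ∈ Matrix.unitaryGroup (Fin 2) ℂ)
    (p : Fin n → ℝ) (hp : ∀ i, 0 ≤ p i) (hsum : ∑ i, p i = 1)
    (ρ1 ρ2 : Matrix (Fin 2) (Fin 2) ℂ)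
    (hne : ρ1 ≠ ρ2)
    (henc : ∑ i, (p i : ℂ) • (U i * ρ1 * (U i)ᴴ) = ∑ i, (p i : ℂ) • (U i * ρ2 * (U i)ᴴ)) :
    -(∑ i, p i * Real.logb 2 (p i)) ≥ 1 := by
  have hmix : ∑ i, (p i : ℂ) • (U i * (ρ1 - ρ2) * (U i)ᴴ) = 0 := by
    simp only [mul_sub, sub_mul, smul_sub, Finset.sum_sub_distrib, henc, sub_self]
  exact one_le_neg_sum_mul_logb_two hp hsum
    (le_half_of_sum_smul_unitary_conj_eq_zero hU hp hsum (sub_ne_zero.mpr hne) hmix)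

theorem stmt_10 (n : ℕ) (U : Fin n → Matrix (Fin 2) (Fin 2) ℂ)
    (hU : ∀ i, U i ∈ Matrix.unitaryGroup (Fin 2) ℂ)
    (p : Fin n → ℝ) (hp : ∀ i, 0 ≤ p i) (hsum : ∑ i, p i = 1)
    (ρ1 ρ2 : Matrix (Fin 2) (Fin 2) ℂ)
    (h1 : ρ1.PosSemidef) (t1 : ρ1.trace = 1)
    (h2 : ρ2.PosSemidef) (t2 : ρ2.trace = 1)
    (hne : ρ1 ≠ ρ2)
    (henc : ∑ i, (p i : ℂ) • (U i * ρ1 * (U i)ᴴ) = ∑ i, (p i : ℂ) • (U i * ρ2 * (U i)ᴴ)) :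
    -(∑ i, p i * Real.logb 2 (p i)) ≥ 1 :=
  stmt_10_general n U hU p hp hsum ρ1 ρ2 hne henc
end

section
/- Let v₁, …, vₙ be unit vectors in Euclidean space ℝ³ and p₁, …, pₙ ≥ 0 with ∑ pⱼ = 1, and set m = ‖∑ⱼ pⱼ·vⱼ‖. Then m ≤ 1 and −∑ⱼ pⱼ log₂ pⱼ ≥ −((1+m)/2)·log₂((1+m)/2) − ((1−m)/2)·log₂((1−m)/2). (The entropy of the key of a private quantum channel is bounded below by the von Neumann entropy of the averaged output state ρ⁰ whenever the plaintext set contains a pure state; here v₁, …, vₙ are the Bloch vectors of the unitarily rotated copies of a pure plaintext and m is the Bloch radius of ρ⁰, whose eigenvalues are (1±m)/2.) -/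
/-!
Write `s = ∑ j, p j • v j`. Pairing `s` with the unit vector `v k` gives
`2 p k - 1 ≤ ⟪v k, s⟫ ≤ ‖s‖ = m`, so every weight is at most `t = (1 + m) / 2 ≥ 1/2`.
The right-hand side is the binary entropy `h t` (in bits), and `h` decreases on `[1/2, 1]`.
If some weight `p k` exceeds `1/2`, then `h t ≤ h (p k)`, and `h (p k)` is at most the
Shannon entropy `H p` because the remaining weights are each at most `1 - p k`. Otherwise all
weights are at most `1/2`, so `H p ≥ 1 ≥ h t`.
-/

open Finset Real
open scoped RealInnerProductSpace

lemma norm_sum_smul_le_one {ι E : Type*} [Fintype ι] [SeminormedAddCommGroup E]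
    [NormedSpace ℝ E] {p : ι → ℝ} {v : ι → E} (hv : ∀ j, ‖v j‖ = 1) (hp : ∀ j, 0 ≤ p j)
    (hsum : ∑ j, p j = 1) : ‖∑ j, p j • v j‖ ≤ 1 :=
  calc ‖∑ j, p j • v j‖ ≤ ∑ j, ‖p j • v j‖ := norm_sum_le _ _
    _ = ∑ j, p j := by simp [norm_smul, hv, abs_of_nonneg (hp _)]
    _ = 1 := hsum

lemma le_one_add_norm_sum_smul_div_two {ι E : Type*} [Fintype ι] [NormedAddCommGroup E]
    [InnerProductSpace ℝ E] {p : ι → ℝ} {v : ι → E} (hv : ∀ j, ‖v j‖ = 1) (hp : ∀ j, 0 ≤ p j)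
    (hsum : ∑ j, p j = 1) (k : ι) : p k ≤ (1 + ‖∑ j, p j • v j‖) / 2 := by
  have hterm : ∀ j, 0 ≤ ⟪v k, v j⟫ + 1 := fun j =>
    neg_le_iff_add_nonneg.mp (neg_one_le_real_inner_of_norm_eq_one (hv k) (hv j))
  have hpair : ⟪v k, ∑ j, p j • v j⟫ + 1 = ∑ j, p j * (⟪v k, v j⟫ + 1) := by
    simp only [inner_sum, real_inner_smul_right, mul_add, mul_one, sum_add_distrib, hsum]
  have hkk : ⟪v k, v k⟫ = 1 := inner_self_eq_one_of_norm_eq_one (hv k)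
  have hlower : p k * 2 ≤ ⟪v k, ∑ j, p j • v j⟫ + 1 :=
    calc p k * 2 = p k * (⟪v k, v k⟫ + 1) := by rw [hkk, one_add_one_eq_two]
      _ ≤ ∑ j, p j * (⟪v k, v j⟫ + 1) :=
        single_le_sum (fun j _ => mul_nonneg (hp j) (hterm j)) (mem_univ k)
      _ = ⟪v k, ∑ j, p j • v j⟫ + 1 := hpair.symm
  have hupper : ⟪v k, ∑ j, p j • v j⟫ ≤ ‖∑ j, p j • v j‖ := by
    simpa [hv] using real_inner_le_norm (v k) (∑ j, p j • v j)
  linarith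

lemma neg_mul_log_le_negMulLog {x c : ℝ} (hx : 0 ≤ x) (hxc : x ≤ c) :
    -(x * log c) ≤ negMulLog x := by
  rw [negMulLog, neg_mul, neg_le_neg_iff]
  rcases hx.eq_or_lt with rfl | hx
  · simp
  · exact mul_le_mul_of_nonneg_left (log_le_log hx hxc) hx.le

section ShannonEntropy

variable {ι : Type*} [Fintype ι] {p : ι → ℝ}

lemma binEntropy_le_sum_negMulLog [DecidableEq ι] (hp : ∀ j, 0 ≤ p j) (hsum : ∑ j, p j = 1)
    (k : ι) : binEntropy (p k) ≤ ∑ j, negMulLog (p j) := by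
  have hrest : ∑ j ∈ univ.erase k, p j = 1 - p k := by
    rw [← hsum, ← add_sum_erase univ p (mem_univ k), add_sub_cancel_left]
  have hbound : ∀ j ∈ univ.erase k, -(p j * log (1 - p k)) ≤ negMulLog (p j) := fun j hj =>
    neg_mul_log_le_negMulLog (hp j) (hrest ▸ single_le_sum (fun i _ => hp i) hj)
  calc binEntropy (p k) = negMulLog (p k) + ∑ j ∈ univ.erase k, -(p j * log (1 - p k)) := by
        rw [binEntropy_eq_negMulLog_add_negMulLog_one_sub, sum_neg_distrib, ← sum_mul, hrest,
          negMulLog_eq_neg]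
    _ ≤ negMulLog (p k) + ∑ j ∈ univ.erase k, negMulLog (p j) := by
        gcongr with j hj
        exact hbound j hj
    _ = ∑ j, negMulLog (p j) := add_sum_erase univ (fun j => negMulLog (p j)) (mem_univ k)

lemma log_two_le_sum_negMulLog (hp : ∀ j, 0 ≤ p j) (hsum : ∑ j, p j = 1)
    (hhalf : ∀ j, p j ≤ 2⁻¹) : log 2 ≤ ∑ j, negMulLog (p j) :=
  calc log 2 = ∑ j, -(p j * log 2⁻¹) := by
        simp only [log_inv, mul_neg, neg_neg, ← sum_mul, hsum, one_mul]
    _ ≤ ∑ j, negMulLog (p j) := sum_le_sum fun j _ => neg_mul_log_le_negMulLog (hp j) (hhalf j)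

lemma binEntropy_le_sum_negMulLog_of_le {t : ℝ} (ht : t ∈ Set.Icc 2⁻¹ 1)
    (hp : ∀ j, 0 ≤ p j) (hsum : ∑ j, p j = 1) (hpt : ∀ j, p j ≤ t) :
    binEntropy t ≤ ∑ j, negMulLog (p j) := by
  classical
  by_cases hbig : ∃ k, 2⁻¹ < p k
  · obtain ⟨k, hk⟩ := hbig
    have hk1 : p k ≤ 1 := hsum ▸ single_le_sum (fun j _ => hp j) (mem_univ k)
    exact (binEntropy_strictAntiOn.antitoneOn ⟨hk.le, hk1⟩ ht (hpt k)).trans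
      (binEntropy_le_sum_negMulLog hp hsum k)
  · push Not at hbig
    exact binEntropy_le_log_two.trans (log_two_le_sum_negMulLog hp hsum hbig)

end ShannonEntropy

theorem stmt_11 (n : ℕ) (v : Fin n → EuclideanSpace ℝ (Fin 3))
    (hv : ∀ j, ‖v j‖ = 1)
    (p : Fin n → ℝ) (hp : ∀ j, 0 ≤ p j) (hsum : ∑ j, p j = 1)
    (m : ℝ) (hm : m = ‖∑ j, p j • v j‖) :
    m ≤ 1 ∧
    -(∑ j, p j * Real.logb 2 (p j)) ≥
      -((1 + m)/2) * Real.logb 2 ((1 + m)/2) - ((1 - m)/2) * Real.logb 2 ((1 - m)/2) := by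
  subst hm
  set m := ‖∑ j, p j • v j‖
  have hm1 : m ≤ 1 := norm_sum_smul_le_one hv hp hsum
  refine ⟨hm1, ?_⟩
  have ht : (1 + m) / 2 ∈ Set.Icc 2⁻¹ 1 := ⟨by linarith [norm_nonneg (∑ j, p j • v j)], by linarith⟩
  have hentropy := binEntropy_le_sum_negMulLog_of_le ht hp hsum
    (le_one_add_norm_sum_smul_div_two hv hp hsum)
  have hlhs : -(∑ j, p j * logb 2 (p j)) = (∑ j, negMulLog (p j)) / log 2 := by
    simp only [logb, negMulLog, sum_div]; rw [← sum_neg_distrib]; congr 1; ext; ring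
  have hrhs : -((1 + m)/2) * logb 2 ((1 + m)/2) - ((1 - m)/2) * logb 2 ((1 - m)/2)
      = binEntropy ((1 + m) / 2) / log 2 := by
    rw [binEntropy, log_inv, log_inv, logb, logb, show 1 - (1 + m) / 2 = (1 - m) / 2 by ring]
    ring
  rw [hlhs, hrhs, ge_iff_le]
  exact div_le_div_of_nonneg_right hentropy (log_pos one_lt_two).le
end

section
/- Let p₀, p_x, p_y, p_z ≥ 0 with p₀ + p_x + p_y + p_z = 1, and let ρ₁ ≠ ρ₂ be two distinct qubit density matrices such that the Pauli channel outputs agree: p₀ρ₁ + p_x σ_x ρ₁ σ_x + p_y σ_y ρ₁ σ_y + p_z σ_z ρ₁ σ_z = p₀ρ₂ + p_x σ_x ρ₂ σ_x + p_y σ_y ρ₂ σ_y + p_z σ_z ρ₂ σ_z. Then (1 − 2(p_y + p_z))·(1 − 2(p_x + p_z))·(1 − 2(p_x + p_y)) = 0. (A nontrivial single-qubit private quantum channel, written as a Pauli channel with Bloch-sphere singular values λ₁, λ₂, λ₃, must have at least one vanishing λⱼ.) -/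
open Matrix ComplexOrder

noncomputable def pauliX : Matrix (Fin 2) (Fin 2) ℂ := !![0, 1; 1, 0]
noncomputable def pauliY : Matrix (Fin 2) (Fin 2) ℂ := !![0, -Complex.I; Complex.I, 0]
noncomputable def pauliZ : Matrix (Fin 2) (Fin 2) ℂ := !![1, 0; 0, -1]

theorem stmt_13 (p0 px py pz : ℝ)
    (hp0 : 0 ≤ p0) (hpx : 0 ≤ px) (hpy : 0 ≤ py) (hpz : 0 ≤ pz)
    (hsum : p0 + px + py + pz = 1)
    (ρ1 ρ2 : Matrix (Fin 2) (Fin 2) ℂ)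
    (h1 : ρ1.PosSemidef) (t1 : ρ1.trace = 1)
    (h2 : ρ2.PosSemidef) (t2 : ρ2.trace = 1)
    (hne : ρ1 ≠ ρ2)
    (henc : (p0 : ℂ) • ρ1 + (px : ℂ) • (pauliX * ρ1 * pauliX)
        + (py : ℂ) • (pauliY * ρ1 * pauliY) + (pz : ℂ) • (pauliZ * ρ1 * pauliZ) =
      (p0 : ℂ) • ρ2 + (px : ℂ) • (pauliX * ρ2 * pauliX)
        + (py : ℂ) • (pauliY * ρ2 * pauliY) + (pz : ℂ) • (pauliZ * ρ2 * pauliZ)) :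
    (1 - 2*(py + pz)) * (1 - 2*(px + pz)) * (1 - 2*(px + py)) = 0 := by
  by_contra h
  have hL1 : ((1 - 2*(py + pz) : ℝ) : ℂ) ≠ 0 := by
    intro hc
    exact h (by rw [show (1 - 2*(py + pz) : ℝ) = 0 by exact_mod_cast hc]; ring)
  have hL2 : ((1 - 2*(px + pz) : ℝ) : ℂ) ≠ 0 := by
    intro hc
    exact h (by rw [show (1 - 2*(px + pz) : ℝ) = 0 by exact_mod_cast hc]; ring)
  have hL3 : ((1 - 2*(px + py) : ℝ) : ℂ) ≠ 0 := by
    intro hc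
    exact h (by rw [show (1 - 2*(px + py) : ℝ) = 0 by exact_mod_cast hc]; ring)
  have hsumC : (p0 : ℂ) + px + py + pz = 1 := by exact_mod_cast hsum
  have E00 := congrFun (congrFun henc 0) 0
  have E01 := congrFun (congrFun henc 0) 1
  have E10 := congrFun (congrFun henc 1) 0
  have E11 := congrFun (congrFun henc 1) 1
  simp [pauliX, pauliY, pauliZ, Matrix.mul_apply, Matrix.vecMul, dotProduct,
    Fin.sum_univ_two, Matrix.add_apply, Matrix.smul_apply] at E00 E01 E10 E11
  rw [Matrix.trace_fin_two] at t1 t2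
  -- off-diagonal
  have k1 : ((1 - 2*(py + pz) : ℝ) : ℂ) * ((ρ1 0 1 + ρ1 1 0) - (ρ2 0 1 + ρ2 1 0)) = 0 := by
    push_cast
    linear_combination E01 + E10 - ((ρ1 0 1 + ρ1 1 0) - (ρ2 0 1 + ρ2 1 0)) * hsumC
      + (-↑py * ((ρ1 0 1 + ρ1 1 0) - (ρ2 0 1 + ρ2 1 0))) * Complex.I_sq
  have k2 : ((1 - 2*(px + pz) : ℝ) : ℂ) * ((ρ1 0 1 - ρ1 1 0) - (ρ2 0 1 - ρ2 1 0)) = 0 := by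
    push_cast
    linear_combination E01 - E10 - ((ρ1 0 1 - ρ1 1 0) - (ρ2 0 1 - ρ2 1 0)) * hsumC
      + (↑py * ((ρ1 0 1 - ρ1 1 0) - (ρ2 0 1 - ρ2 1 0))) * Complex.I_sq
  have k3 : ((1 - 2*(px + py) : ℝ) : ℂ) * ((ρ1 0 0 - ρ1 1 1) - (ρ2 0 0 - ρ2 1 1)) = 0 := by
    push_cast
    linear_combination E00 - E11 - ((ρ1 0 0 - ρ1 1 1) - (ρ2 0 0 - ρ2 1 1)) * hsumC
      + (-↑py * ((ρ1 0 0 - ρ1 1 1) - (ρ2 0 0 - ρ2 1 1))) * Complex.I_sq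
  have q1 := (mul_eq_zero.mp k1).resolve_left hL1
  have q2 := (mul_eq_zero.mp k2).resolve_left hL2
  have q3 := (mul_eq_zero.mp k3).resolve_left hL3
  apply hne
  ext i j
  fin_cases i <;> fin_cases j
  · show ρ1 0 0 = ρ2 0 0
    linear_combination (q3 + t1 - t2) / 2
  · show ρ1 0 1 = ρ2 0 1
    linear_combination (q1 + q2) / 2
  · show ρ1 1 0 = ρ2 1 0
    linear_combination (q1 - q2) / 2
  · show ρ1 1 1 = ρ2 1 1
    linear_combination (t1 - t2 - q3) / 2
end

section
/- There do not exist a natural number n, probabilities p₁, …, pₙ ≥ 0 with ∑ pᵢ = 1, and 2×2 unitary matrices U₁, …, Uₙ such that ∑ᵢ pᵢ Uᵢ ρ Uᵢ† = I − ρ for every qubit density matrix ρ. (The universal NOT operation on a qubit, which maps every state to its antipodal state on the Bloch sphere, cannot be realized as a mixture of unitary transformations; this follows from the fact that one bit of key is not sufficient to encrypt the whole qubit state space.) -/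
open Matrix ComplexOrder

private lemma unot_key {n : ℕ} (p : Fin n → ℝ) (U : Fin n → Matrix (Fin 2) (Fin 2) ℂ)
    (hp : ∀ i, 0 ≤ p i)
    (h : ∀ ρ : Matrix (Fin 2) (Fin 2) ℂ, ρ.PosSemidef → ρ.trace = 1 →
      ∑ i, (p i : ℂ) • (U i * ρ * (U i)ᴴ) = 1 - ρ)
    (v : Fin 2 → ℂ)
    (hv : v 0 * star (v 0) + v 1 * star (v 1) = 1)
    (i : Fin n) (hpi : p i ≠ 0) :
    star (v 0) * (U i 0 0 * v 0 + U i 0 1 * v 1)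
      + star (v 1) * (U i 1 0 * v 0 + U i 1 1 * v 1) = 0 := by
  set ρ : Matrix (Fin 2) (Fin 2) ℂ := Matrix.of fun j k => v j * star (v k) with hρ
  have hps : ρ.PosSemidef := by
    have h2 := Matrix.posSemidef_conjTranspose_mul_self
      (Matrix.of fun (_ : Fin 1) (k : Fin 2) => star (v k))
    convert h2 using 1
    ext j k
    simp [Matrix.mul_apply, Matrix.conjTranspose_apply, hρ, Fin.sum_univ_one, mul_comm]
  have htr : ρ.trace = 1 := by
    simp only [Matrix.trace_fin_two, hρ, Matrix.of_apply]
    exact hv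
  have heq := h ρ hps htr
  set c : Fin n → ℂ := fun i => star (v 0) * (U i 0 0 * v 0 + U i 0 1 * v 1)
      + star (v 1) * (U i 1 0 * v 0 + U i 1 1 * v 1) with hc
  have e : ∀ j k : Fin 2, ∑ i, (p i : ℂ) *
      ((U i j 0 * v 0 + U i j 1 * v 1) * star (U i k 0 * v 0 + U i k 1 * v 1))
      = (1 - ρ) j k := by
    intro j k
    have h3 := congrFun (congrFun heq j) k
    rw [Matrix.sum_apply] at h3
    rw [← h3]
    refine Finset.sum_congr rfl fun l _ => ?_
    simp only [Matrix.smul_apply, smul_eq_mul, Matrix.mul_apply, Fin.sum_univ_two,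
      Matrix.conjTranspose_apply, hρ, Matrix.of_apply, star_add, StarMul.star_mul, star_star]
    ring
  have hQ : ∑ i, (p i : ℂ) * (c i * star (c i)) = 0 := by
    have expand : ∀ l, (p l : ℂ) * (c l * star (c l)) =
        star (v 0) * ((p l : ℂ) * ((U l 0 0 * v 0 + U l 0 1 * v 1) * star (U l 0 0 * v 0 + U l 0 1 * v 1))) * v 0
      + (star (v 0) * ((p l : ℂ) * ((U l 0 0 * v 0 + U l 0 1 * v 1) * star (U l 1 0 * v 0 + U l 1 1 * v 1))) * v 1
      + (star (v 1) * ((p l : ℂ) * ((U l 1 0 * v 0 + U l 1 1 * v 1) * star (U l 0 0 * v 0 + U l 0 1 * v 1))) * v 0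
      + star (v 1) * ((p l : ℂ) * ((U l 1 0 * v 0 + U l 1 1 * v 1) * star (U l 1 0 * v 0 + U l 1 1 * v 1))) * v 1)) := by
      intro l
      simp only [hc, star_add, StarMul.star_mul, star_star]
      ring
    rw [Finset.sum_congr rfl fun l _ => expand l]
    rw [Finset.sum_add_distrib, Finset.sum_add_distrib, Finset.sum_add_distrib]
    simp only [← Finset.mul_sum, ← Finset.sum_mul]
    rw [e 0 0, e 0 1, e 1 0, e 1 1]
    simp only [Matrix.sub_apply, Matrix.one_apply_eq, Matrix.one_apply_ne (by norm_num : (0:Fin 2) ≠ 1),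
      Matrix.one_apply_ne (by norm_num : (1:Fin 2) ≠ 0), hρ, Matrix.of_apply]
    linear_combination (-(v 0 * star (v 0) + v 1 * star (v 1))) * hv
  have hQ' : ∑ j, p j * Complex.normSq (c j) = 0 := by
    have h4 : ((∑ j, p j * Complex.normSq (c j) : ℝ) : ℂ) = ∑ j, (p j : ℂ) * (c j * star (c j)) := by
      push_cast
      refine Finset.sum_congr rfl fun j _ => ?_
      rw [show star (c j) = (starRingEnd ℂ) (c j) from rfl, Complex.mul_conj]
    exact_mod_cast h4.trans hQ
  have hterm : p i * Complex.normSq (c i) = 0 :=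
    (Finset.sum_eq_zero_iff_of_nonneg (fun j _ => mul_nonneg (hp j) (Complex.normSq_nonneg _))).mp
      hQ' i (Finset.mem_univ i)
  have h5 : Complex.normSq (c i) = 0 := by
    rcases mul_eq_zero.mp hterm with h' | h'
    · exact absurd h' hpi
    · exact h'
  exact Complex.normSq_eq_zero.mp h5

theorem stmt_17 : ¬ ∃ (n : ℕ) (p : Fin n → ℝ) (U : Fin n → Matrix (Fin 2) (Fin 2) ℂ),
    (∀ i, 0 ≤ p i) ∧ (∑ i, p i = 1) ∧ (∀ i, U i ∈ Matrix.unitaryGroup (Fin 2) ℂ) ∧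
    (∀ ρ : Matrix (Fin 2) (Fin 2) ℂ, ρ.PosSemidef → ρ.trace = 1 →
      ∑ i, (p i : ℂ) • (U i * ρ * (U i)ᴴ) = 1 - ρ) := by
  rintro ⟨n, p, U, hp, hsum, hU, h⟩
  obtain ⟨i, hpi⟩ : ∃ i, p i ≠ 0 := by
    by_contra hc
    push_neg at hc
    simp [hc] at hsum
  set r : ℂ := (((Real.sqrt 2)⁻¹ : ℝ) : ℂ) with hr
  have hrr : r * r = 1 / 2 := by
    rw [hr]
    norm_cast
    rw [← mul_inv]
    rw [Real.mul_self_sqrt (by norm_num)]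
    norm_num
  have hrne : r ≠ 0 := by
    intro h0
    rw [h0] at hrr
    norm_num at hrr
  have hrstar : star r = r := by rw [hr]; exact Complex.conj_ofReal _
  have k1 := unot_key p U hp h ![1, 0] (by norm_num) i hpi
  have k2 := unot_key p U hp h ![0, 1] (by norm_num) i hpi
  have k3 := unot_key p U hp h ![r, r] (by
    simp only [Matrix.cons_val_zero, Matrix.cons_val_one, Matrix.head_cons, hrstar]
    rw [hrr]; norm_num) i hpi
  have k4 := unot_key p U hp h ![r, r * Complex.I] (by
    simp only [Matrix.cons_val_zero, Matrix.cons_val_one, Matrix.head_cons, StarMul.star_mul, hrstar,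
      Complex.star_def, Complex.conj_I]
    have : r * Complex.I * (-Complex.I * r) = r * r := by
      linear_combination (-(r * r)) * Complex.I_mul_I
    rw [this, hrr]; norm_num) i hpi
  simp only [Matrix.cons_val_zero, Matrix.cons_val_one, Matrix.head_cons, star_one, star_zero,
    mul_zero, mul_one, zero_mul, one_mul, add_zero, zero_add] at k1 k2
  -- k1 : U i 0 0 = 0, k2 : U i 1 1 = 0
  simp only [Matrix.cons_val_zero, Matrix.cons_val_one, Matrix.head_cons, hrstar] at k3 k4
  have h3' : U i 0 1 + U i 1 0 = 0 := by
    have : (r * r) * (U i 0 0 + U i 0 1 + U i 1 0 + U i 1 1) = 0 := by linear_combination k3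
    rw [hrr] at this
    have h6 : U i 0 0 + U i 0 1 + U i 1 0 + U i 1 1 = 0 := by
      field_simp at this
      linear_combination this
    rw [k1, k2] at h6
    linear_combination h6
  have h4' : U i 0 1 - U i 1 0 = 0 := by
    have hst : star (r * Complex.I) = -Complex.I * r := by
      rw [StarMul.star_mul, hrstar, Complex.star_def, Complex.conj_I]
    rw [hst] at k4
    have : (r * r) * (Complex.I * (U i 0 1 - U i 1 0)) = 0 := by
      rw [← k4, k1, k2]
      ring
    rw [hrr] at this
    have h7 : Complex.I * (U i 0 1 - U i 1 0) = 0 := by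
      field_simp at this
      linear_combination this
    rcases mul_eq_zero.mp h7 with h8 | h8
    · exact absurd h8 Complex.I_ne_zero
    · exact h8
  have h01 : U i 0 1 = 0 := by linear_combination (h3' + h4') / 2
  have h10 : U i 1 0 = 0 := by linear_combination (h3' - h4') / 2
  have hu := Matrix.mem_unitaryGroup_iff.mp (hU i)
  have := congrFun (congrFun hu 0) 0
  simp [Matrix.mul_apply, Fin.sum_univ_two, k1, h01, Matrix.one_apply] at this
end
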